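/- For integers 1 ≤ s ≤ ⌈L/2⌉, the polynomial [L choose s]_q - [L choose s-1]_q has nonnegative coefficients. -/

import Mathlib

/-!
Set `D_r(L, s) = [L, s] - q^r [L, s-1]`, with `[L, -1] = 0`. The two q-Pascal rules give
`D_r(L+1, s) = D_r(L, s) + q^(L+1-s) D_(r+1)(L, s-1)` and
`D_(r+1)(L+1, s) = q^s D_r(L, s) + D_(r+1)(L, s-1)`,
so induction on `L` shows that `D_r(L, s)` has nonnegative coefficients whenever
`2s + r ≤ L + 1`: the only pair not reached by these recursions is `r = 0`, `2s = L + 2`,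
where `D_0(L+1, s) = 0` by the symmetry `[2s-1, s] = [2s-1, s-1]`. The theorem is the case `r = 0`.
-/

open PowerSeries Finset

noncomputable def qPoch (n : ℕ) : PowerSeries ℚ :=
  ∏ k ∈ Finset.range n, (1 - (X : PowerSeries ℚ) ^ (k + 1))

noncomputable def gauss (L : ℕ) (s : ℤ) : PowerSeries ℚ :=
  if 0 ≤ s ∧ s ≤ (L : ℤ) then
    qPoch L * (qPoch s.toNat)⁻¹ * (qPoch (L - s.toNat))⁻¹
  else 0

def nonnegCoeffs (R : Type*) [CommSemiring R] [PartialOrder R] [IsOrderedRing R] :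
    Subsemiring (PowerSeries R) where
  carrier := {f | ∀ k, 0 ≤ coeff k f}
  zero_mem' k := by simp
  one_mem' k := by rw [coeff_one]; split_ifs <;> simp
  add_mem' hf hg k := by rw [map_add]; exact add_nonneg (hf k) (hg k)
  mul_mem' hf hg k := by
    rw [coeff_mul]; exact sum_nonneg fun p _ => mul_nonneg (hf p.1) (hg p.2)

lemma X_mem_nonnegCoeffs (R : Type*) [CommSemiring R] [PartialOrder R] [IsOrderedRing R] :
    X ∈ nonnegCoeffs R := fun k => by rw [coeff_X]; split_ifs <;> simp

lemma qPoch_zero : qPoch 0 = 1 := by simp [qPoch]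

lemma qPoch_succ (n : ℕ) : qPoch (n + 1) = qPoch n * (1 - X ^ (n + 1)) := by
  simp [qPoch, prod_range_succ]

lemma constantCoeff_qPoch (n : ℕ) : constantCoeff (qPoch n) = 1 := by
  induction n with
  | zero => simp [qPoch_zero]
  | succ n ih => simp [qPoch_succ, ih]

lemma qPoch_mul_inv (n : ℕ) : qPoch n * (qPoch n)⁻¹ = 1 :=
  PowerSeries.mul_inv_cancel _ (by simp [constantCoeff_qPoch])

lemma inv_qPoch (n : ℕ) : (qPoch n)⁻¹ = (qPoch (n + 1))⁻¹ * (1 - X ^ (n + 1)) := by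
  symm
  rw [eq_inv_iff_mul_eq_one (by simp [constantCoeff_qPoch]), mul_assoc, mul_comm _ (qPoch n),
    ← qPoch_succ, PowerSeries.inv_mul_cancel _ (by simp [constantCoeff_qPoch])]

lemma gauss_of_add_eq {L s b : ℕ} (h : s + b = L) :
    gauss L s = qPoch L * (qPoch s)⁻¹ * (qPoch b)⁻¹ := by
  rw [gauss, if_pos (by omega), Int.toNat_natCast, show L - s = b by omega]

lemma gauss_of_neg (L : ℕ) {s : ℤ} (h : s < 0) : gauss L s = 0 :=
  if_neg (by omega)

lemma gauss_of_lt (L : ℕ) {s : ℕ} (h : L < s) : gauss L s = 0 :=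
  if_neg (by omega)

lemma gauss_zero (L : ℕ) : gauss L 0 = 1 := by
  rw [← Nat.cast_zero, gauss_of_add_eq (zero_add L), qPoch_zero, inv_one, mul_one, qPoch_mul_inv]

lemma gauss_self (L : ℕ) : gauss L L = 1 := by
  rw [gauss_of_add_eq (add_zero L), qPoch_zero, inv_one, mul_one, qPoch_mul_inv]

lemma gauss_add_symm (a b : ℕ) : gauss (a + b) a = gauss (a + b) b := by
  rw [gauss_of_add_eq rfl, gauss_of_add_eq (add_comm b a), mul_right_comm]

lemma natCast_succ_sub_one (s : ℕ) : ((s + 1 : ℕ) : ℤ) - 1 = s := by simp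

lemma gauss_succ_left (L s : ℕ) :
    gauss (L + 1) s = gauss L s + X ^ (L + 1 - s) * gauss L ((s : ℤ) - 1) := by
  rcases s with _ | a
  · simp [gauss_zero, gauss_of_neg]
  rw [natCast_succ_sub_one]
  rcases le_or_gt (a + 1) L with hL | hL
  · obtain ⟨b, rfl⟩ := Nat.exists_eq_add_of_le hL
    rw [gauss_of_add_eq (by omega : a + 1 + (b + 1) = a + 1 + b + 1), gauss_of_add_eq rfl,
      gauss_of_add_eq (by omega : a + (b + 1) = a + 1 + b), qPoch_succ (a + 1 + b), inv_qPoch a,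
      inv_qPoch b, show a + 1 + b + 1 - (a + 1) = b + 1 by omega]
    ring
  obtain rfl | hL := (Nat.lt_succ_iff.mp hL).eq_or_lt
  · rw [gauss_self, gauss_of_lt L (Nat.lt_succ_self L), gauss_self]
    simp
  · rw [gauss_of_lt (L + 1) (by omega), gauss_of_lt L hL, gauss_of_lt L (by omega)]
    simp

lemma gauss_succ_right (L s : ℕ) :
    gauss (L + 1) s = X ^ s * gauss L s + gauss L ((s : ℤ) - 1) := by
  rcases s with _ | a
  · simp [gauss_zero, gauss_of_neg]
  rw [natCast_succ_sub_one]
  rcases le_or_gt (a + 1) L with hL | hL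
  · obtain ⟨b, rfl⟩ := Nat.exists_eq_add_of_le hL
    rw [gauss_of_add_eq (by omega : a + 1 + (b + 1) = a + 1 + b + 1), gauss_of_add_eq rfl,
      gauss_of_add_eq (by omega : a + (b + 1) = a + 1 + b), qPoch_succ (a + 1 + b), inv_qPoch a,
      inv_qPoch b]
    ring
  obtain rfl | hL := (Nat.lt_succ_iff.mp hL).eq_or_lt
  · rw [gauss_self, gauss_of_lt L (Nat.lt_succ_self L), gauss_self]
    simp
  · rw [gauss_of_lt (L + 1) (by omega), gauss_of_lt L hL, gauss_of_lt L (by omega)]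
    simp

theorem gauss_sub_X_pow_mul_gauss_mem_nonnegCoeffs (L s r : ℕ) (h : 2 * s + r ≤ L + 1) :
    gauss L s - X ^ r * gauss L ((s : ℤ) - 1) ∈ nonnegCoeffs ℚ := by
  have hX := X_mem_nonnegCoeffs ℚ
  induction L generalizing s r with
  | zero =>
    obtain rfl : s = 0 := by omega
    simp [gauss_zero, gauss_of_neg, one_mem]
  | succ L ih =>
    rcases s with _ | t
    · simp [gauss_zero, gauss_of_neg, one_mem]
    rw [natCast_succ_sub_one]
    rcases r with _ | r
    · rcases (show 2 * (t + 1) ≤ L + 1 ∨ L = t + t by omega) with hle | rfl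
      · have key := add_mem (ih (t + 1) 0 hle) (mul_mem (pow_mem hX (L - t)) (ih t 1 (by omega)))
        rw [natCast_succ_sub_one] at key
        convert key using 1
        rw [gauss_succ_left, gauss_succ_left, natCast_succ_sub_one,
          show L + 1 - (t + 1) = L - t by omega, show L + 1 - t = L - t + 1 by omega]
        ring
      · rw [show t + t + 1 = t + 1 + t by ring, gauss_add_symm, pow_zero, one_mul, sub_self]
        exact zero_mem _
    · have key :=
        add_mem (mul_mem (pow_mem hX (t + 1)) (ih (t + 1) r (by omega))) (ih t (r + 1) (by omega))
      rw [natCast_succ_sub_one] at key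
      convert key using 1
      rw [gauss_succ_right, gauss_succ_right, natCast_succ_sub_one]
      ring

theorem stmt6_general (L s : ℕ) (h2 : s ≤ (L + 1) / 2) :
    ∀ k : ℕ, 0 ≤ PowerSeries.coeff (R := ℚ) k (gauss L s - gauss L ((s : ℤ) - 1)) := by
  have h := gauss_sub_X_pow_mul_gauss_mem_nonnegCoeffs L s 0 (by omega)
  rwa [pow_zero, one_mul] at h

/-- For `1 ≤ s ≤ ⌈L/2⌉`, the polynomial `[L, s] - [L, s-1]` has nonnegative
coefficients. -/
theorem stmt6 (L s : ℕ) (h1 : 1 ≤ s) (h2 : s ≤ (L + 1) / 2) :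
    ∀ k : ℕ, 0 ≤ PowerSeries.coeff (R := ℚ) k (gauss L s - gauss L ((s : ℤ) - 1)) :=
  stmt6_general L s h2
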